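/- arXiv:math/0510600 — 5 statements merged into one kernel-verified Lean document; each statement's English description precedes it below -/
import Mathlib

section
/- Let r : M̂ → M be a covering map with M̂ simply connected. Let a, b ∈ M, x ∈ r⁻¹(a), y ∈ r⁻¹(b), let μ be a path in M from a to b, and for every p ∈ M let γ_p be a path from a to p and δ_p a path from b to p. Then there exists ψ ∈ π₁(M, a) such that for every p ∈ M there exists η_p ∈ π₁(M, a) such that for every loop φ based at a: F^y_{δ_p}([μ̄ * φ * μ]) = F^x_{γ_p}(ψ · [φ] · η_p). In other words, the labelings of the fibers r⁻¹(p) by elements of π₁(M, a) determined by the two sets of choices differ by left multiplication by one common element of π₁(M, a) for all p, and right multiplication by an element of π₁(M, a) which may depend on p. -/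
open unitInterval

section Aux

set_option linter.unusedSectionVars false

variable {E X : Type*} [TopologicalSpace E] [TopologicalSpace X]
  {r : E → X}

noncomputable def fh (f : I → E) : I → E :=
  fun t => f ⟨(t : ℝ) / 2, ⟨div_nonneg t.2.1 two_pos.le, by linarith [t.2.2]⟩⟩

noncomputable def sh (f : I → E) : I → E :=
  fun t => f ⟨((t : ℝ) + 1) / 2, ⟨by linarith [t.2.1], by linarith [t.2.2]⟩⟩

noncomputable def rv (f : I → E) : I → E := fun t => f (unitInterval.symm t)

lemma fh_cont {f : I → E} (hf : Continuous f) : Continuous (fh f) :=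
  hf.comp (Continuous.subtype_mk (by fun_prop) _)

lemma sh_cont {f : I → E} (hf : Continuous f) : Continuous (sh f) :=
  hf.comp (Continuous.subtype_mk (by fun_prop) _)

lemma rv_cont {f : I → E} (hf : Continuous f) : Continuous (rv f) :=
  hf.comp continuous_symm

lemma fh_zero (f : I → E) : fh f 0 = f 0 := by
  unfold fh; congr 1; ext; norm_num

lemma fh_one_eq_sh_zero (f : I → E) : fh f 1 = sh f 0 := by
  unfold fh sh; congr 1; ext; norm_num

lemma sh_one (f : I → E) : sh f 1 = f 1 := by
  unfold sh; congr 1; ext; norm_num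

lemma rv_zero (f : I → E) : rv f 0 = f 1 := by
  unfold rv; rw [symm_zero]

lemma rv_one (f : I → E) : rv f 1 = f 0 := by
  unfold rv; rw [symm_one]

lemma fh_lift {a b c : X} {α : Path a b} {β : Path b c} {f : I → E}
    (h : ∀ t, r (f t) = (α.trans β) t) : ∀ t, r (fh f t) = α t := by
  intro t
  unfold fh
  rw [h, Path.trans_apply]
  split_ifs with h'
  · congr 1; ext; push_cast; ring
  · exact absurd (by simp; linarith [t.2.2]) h'

lemma sh_lift {a b c : X} {α : Path a b} {β : Path b c} {f : I → E}
    (h : ∀ t, r (f t) = (α.trans β) t) : ∀ t, r (sh f t) = β t := by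
  intro t
  unfold sh
  rw [h, Path.trans_apply]
  split_ifs with h'
  · have h'' : ((t : ℝ) + 1) / 2 ≤ 1 / 2 := h'
    have ht : t = 0 := by
      ext; simp only [Set.Icc.coe_zero]; exact le_antisymm (by linarith) t.2.1
    subst ht
    trans (α 1)
    · congr 1; ext; show 2 * ((((0 : I) : ℝ) + 1) / 2) = 1; norm_num
    · rw [α.target, β.source]
  · congr 1; ext; push_cast; ring

lemma rv_lift {b c : X} {β : Path b c} {f : I → E}
    (h : ∀ t, r (f t) = β.symm t) : ∀ t, r (rv f t) = β t := by
  intro t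
  unfold rv
  rw [h, Path.symm_apply]
  simp

lemma ends_eq (hr : IsCoveringMap r) {f g : I → E} (hf : Continuous f) (hg : Continuous g)
    (hfg : ∀ t, r (f t) = r (g t)) (h0 : f 0 = g 0) : f 1 = g 1 := by
  have := hr.eq_of_comp_eq hf hg (funext hfg) 0 h0
  exact congrFun this 1

end Aux


/-- `Γ` is a lift through `r` of the path `γ` (as a path in the total space from `x` to `z`,
i.e. the lift of `γ` starting at `x` and ending at `z`). -/
def IsPathLift {E X : Type*} [TopologicalSpace E] [TopologicalSpace X]
    (r : E → X) {a b : X} (γ : Path a b) {x z : E} (Γ : Path x z) : Prop :=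
  ∀ t, r (Γ t) = γ t

/-- The labelings of the fibers `r⁻¹(p)` by elements of `π₁(M, a)` determined by two sets of
choices differ by left multiplication by one common element of `π₁(M, a)` for all `p`, and right
multiplication by an element of `π₁(M, a)` which may depend on `p`:
`F^y_{δ_p}([μ̄ * φ * μ]) = F^x_{γ_p}(ψ · [φ] · η_p)`. -/
theorem labeling_change_of_choices
    {E X : Type*} [TopologicalSpace E] [TopologicalSpace X]
    (r : E → X) (hr : IsCoveringMap r) [SimplyConnectedSpace E]
    (a b : X) (x y : E) (hx : r x = a) (hy : r y = b)
    (μ : Path a b) (γ : ∀ p : X, Path a p) (δ : ∀ p : X, Path b p) :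
    ∃ ψ : Path a a, ∀ p : X, ∃ η : Path a a, ∀ φ : Path a a,
      ∀ (z₁ z₂ : E) (Γ₁ : Path y z₁) (Γ₂ : Path x z₂),
        IsPathLift r (((μ.symm.trans φ).trans μ).trans (δ p)) Γ₁ →
        IsPathLift r (((ψ.trans φ).trans η).trans (γ p)) Γ₂ →
        z₁ = z₂ := by
  have hc : Continuous r := hr.continuous
  let Y : Path x y := PathConnectedSpace.somePath x y
  let ν : Path a b := (Y.map hc).cast hx.symm hy.symm
  have hν : ∀ t, ν t = r (Y t) := fun t => by
    show (Y.map hc).cast hx.symm hy.symm t = r (Y t)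
    rw [Path.cast_coe, Path.map_coe]; rfl
  refine ⟨ν.trans μ.symm, fun p =>
    ⟨(μ.trans (δ p)).trans (γ p).symm, fun φ z₁ z₂ Γ₁ Γ₂ h₁ h₂ => ?_⟩⟩
  -- unfold IsPathLift
  replace h₁ : ∀ t, r (Γ₁ t) = (((μ.symm.trans φ).trans μ).trans (δ p)) t := h₁
  replace h₂ : ∀ t, r (Γ₂ t) =
      ((((ν.trans μ.symm).trans φ).trans ((μ.trans (δ p)).trans (γ p).symm)).trans (γ p)) t := h₂
  -- decompose Γ₂
  have hg1 := fh_lift h₂    -- lifts (ψ.trans φ).trans η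
  have hLγ := sh_lift h₂    -- lifts γ p
  have hg3 := fh_lift hg1   -- lifts ψ.trans φ
  have hLη := sh_lift hg1   -- lifts η
  have hLψ := fh_lift hg3   -- lifts ν.trans μ.symm
  have hLφ := sh_lift hg3   -- lifts φ
  have hLν := fh_lift hLψ   -- lifts ν
  have hLμ' := sh_lift hLψ  -- lifts μ.symm
  have hg5 := fh_lift hLη   -- lifts μ.trans (δ p)
  have hLγ' := sh_lift hLη  -- lifts (γ p).symm
  have hLμ := fh_lift hg5   -- lifts μ
  have hLδ := sh_lift hg5   -- lifts δ p
  -- decompose Γ₁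
  have hk1 := fh_lift h₁    -- lifts (μ.symm.trans φ).trans μ
  have hMδ := sh_lift h₁    -- lifts δ p
  have hk2 := fh_lift hk1   -- lifts μ.symm.trans φ
  have hMμ := sh_lift hk1   -- lifts μ
  have hMμ' := fh_lift hk2  -- lifts μ.symm
  have hMφ := sh_lift hk2   -- lifts φ
  -- reversed tail of Γ₂
  have hR := rv_lift hLγ'   -- lifts γ p
  -- continuity
  have c2 : Continuous (⇑Γ₂) := Γ₂.continuous
  have cg1 := fh_cont c2
  have cLγ := sh_cont c2
  have cg3 := fh_cont cg1
  have cLη := sh_cont cg1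
  have cLψ := fh_cont cg3
  have cLφ := sh_cont cg3
  have cLν := fh_cont cLψ
  have cLμ' := sh_cont cLψ
  have cg5 := fh_cont cLη
  have cLγ' := sh_cont cLη
  have cLμ := fh_cont cg5
  have cLδ := sh_cont cg5
  have c1 : Continuous (⇑Γ₁) := Γ₁.continuous
  have ck1 := fh_cont c1
  have cMδ := sh_cont c1
  have ck2 := fh_cont ck1
  have cMμ := sh_cont ck1
  have cMμ' := fh_cont ck2
  have cMφ := sh_cont ck2
  have cR := rv_cont cLγ'
  -- Step A : end of Lν is y
  have stepA : fh (fh (fh (fh (⇑Γ₂)))) 1 = y := by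
    have := ends_eq hr cLν Y.continuous
      (fun t => by rw [hLν t, hν t])
      (by rw [fh_zero, fh_zero, fh_zero, fh_zero, Γ₂.source, Y.source])
    rw [this, Y.target]
  -- Step B : ends of the two lifts of μ.symm agree
  have stepB : sh (fh (fh (fh (⇑Γ₂)))) 1 = fh (fh (fh (⇑Γ₁))) 1 := by
    refine ends_eq hr cLμ' cMμ' (fun t => (hLμ' t).trans (hMμ' t).symm) ?_
    rw [← fh_one_eq_sh_zero, stepA, fh_zero, fh_zero, fh_zero, Γ₁.source]
  -- Step C : ends of the two lifts of φ agree
  have stepC : sh (fh (fh (⇑Γ₂))) 1 = sh (fh (fh (⇑Γ₁))) 1 := by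
    refine ends_eq hr cLφ cMφ (fun t => (hLφ t).trans (hMφ t).symm) ?_
    rw [← fh_one_eq_sh_zero, ← fh_one_eq_sh_zero, ← sh_one (fh (fh (fh (⇑Γ₂))))]
    exact stepB
  -- Step D : ends of the two lifts of μ agree
  have stepD : fh (fh (sh (fh (⇑Γ₂)))) 1 = sh (fh (⇑Γ₁)) 1 := by
    refine ends_eq hr cLμ cMμ (fun t => (hLμ t).trans (hMμ t).symm) ?_
    rw [fh_zero, fh_zero, ← fh_one_eq_sh_zero, ← fh_one_eq_sh_zero,
      ← sh_one (fh (fh (⇑Γ₂))), ← sh_one (fh (fh (⇑Γ₁)))]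
    exact stepC
  -- Step E : end of the lift of δ p inside Γ₂ is z₁
  have stepE : sh (fh (sh (fh (⇑Γ₂)))) 1 = z₁ := by
    have := ends_eq hr cLδ cMδ (fun t => (hLδ t).trans (hMδ t).symm) ?_
    · rw [this, sh_one, Γ₁.target]
    · rw [← fh_one_eq_sh_zero, ← fh_one_eq_sh_zero, ← sh_one (fh (⇑Γ₁))]
      exact stepD
  -- Step F : the reversed lift of (γ p).symm and the lift of γ p
  have stepF : rv (sh (sh (fh (⇑Γ₂)))) 1 = sh (⇑Γ₂) 1 := by
    refine ends_eq hr cR cLγ (fun t => (hR t).trans (hLγ t).symm) ?_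
    rw [rv_zero, sh_one, sh_one, fh_one_eq_sh_zero]
  calc z₁ = sh (fh (sh (fh (⇑Γ₂)))) 1 := stepE.symm
    _ = fh (sh (fh (⇑Γ₂))) 1 := sh_one _
    _ = sh (sh (fh (⇑Γ₂))) 0 := fh_one_eq_sh_zero _
    _ = rv (sh (sh (fh (⇑Γ₂)))) 1 := (rv_one _).symm
    _ = sh (⇑Γ₂) 1 := stepF
    _ = Γ₂ 1 := sh_one _
    _ = z₂ := Γ₂.target
end

section
/- Let r : M̂ → M be a covering map, let a, p, q ∈ M, x ∈ r⁻¹(a), let γ_p be a path from a to p, γ_q a path from a to q, and δ a path from p to q. Then for every loop φ based at a: G_δ(F^x_{γ_p}([φ])) = F^x_{γ_q}([φ] · [γ_p * δ * γ̄_q]); explicitly, δ^{(φ * γ_p)^x(1)}(1) = ((φ * (γ_p * δ * γ̄_q)) * γ_q)^x(1). That is, in terms of the labeling of the fibers, G_δ acts as right multiplication by the class [γ_p * δ * γ̄_q]. -/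
section
variable {E X : Type*} [TopologicalSpace E] [TopologicalSpace X] {r : E → X}
  {a b : X} {γ : Path a b} {x z : E} {Γ : Path x z}

theorem IsPathLift.map_source (hΓ : IsPathLift r γ Γ) : r x = a := by
  simpa using hΓ 0

theorem IsPathLift.map_target (hΓ : IsPathLift r γ Γ) : r z = b := by
  simpa using hΓ 1

theorem IsCoveringMap.monodromy_mk_of_isPathLift (hr : IsCoveringMap r) (hΓ : IsPathLift r γ Γ) :
    hr.monodromy (.mk γ) ⟨x, hΓ.map_source⟩ = ⟨z, hΓ.map_target⟩ := by
  have hlift : (Γ : C(unitInterval, E)) = hr.liftPath γ x (γ.source.trans hΓ.map_source.symm) :=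
    (hr.eq_liftPath_iff' _).mpr ⟨funext hΓ, Γ.source⟩
  exact Subtype.ext (congr($hlift 1).symm.trans Γ.target)

end

theorem fiber_transport_is_right_multiplication_general
    {E X : Type*} [TopologicalSpace E] [TopologicalSpace X]
    (r : E → X) (hr : IsCoveringMap r)
    (a p q : X) (x : E)
    (γp : Path a p) (γq : Path a q) (δ : Path p q) :
    ∀ (φ : Path a a) (z₁ : E) (Γ₁ : Path x z₁) (w : E) (Δ : Path z₁ w)
      (z₂ : E) (Γ₂ : Path x z₂),
      IsPathLift r (φ.trans γp) Γ₁ →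
      IsPathLift r δ Δ →
      IsPathLift r ((φ.trans ((γp.trans δ).trans γq.symm)).trans γq) Γ₂ →
      w = z₂ := by
  intro φ z₁ Γ₁ w Δ z₂ Γ₂ hΓ₁ hΔ hΓ₂
  open Path.Homotopic.Quotient in
  have hclass :
      mk ((φ.trans ((γp.trans δ).trans γq.symm)).trans γq) = mk ((φ.trans γp).trans δ) := by
    simp only [mk_trans, mk_symm, trans_assoc, symm_trans, trans_refl]
  have hfiber : (⟨w, hΔ.map_target⟩ : r ⁻¹' {q}) = ⟨z₂, hΓ₂.map_target⟩ :=
    calc (⟨w, hΔ.map_target⟩ : r ⁻¹' {q})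
        = hr.monodromy (.mk δ) (hr.monodromy (.mk (φ.trans γp)) ⟨x, hΓ₁.map_source⟩) := by
          rw [hr.monodromy_mk_of_isPathLift hΓ₁, hr.monodromy_mk_of_isPathLift hΔ]
      _ = hr.monodromy (.mk ((φ.trans γp).trans δ)) ⟨x, hΓ₁.map_source⟩ := by
          rw [Path.Homotopic.Quotient.mk_trans _ δ, hr.monodromy_trans_apply]
      _ = ⟨z₂, hΓ₂.map_target⟩ := by
          rw [← hclass, hr.monodromy_mk_of_isPathLift hΓ₂]
  exact congrArg Subtype.val hfiber

/-- For a covering map `r`, points `a, p, q`, `x ∈ r⁻¹(a)`, paths `γ_p : a → p`, `γ_q : a → q` and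
`δ : p → q`, for every loop `φ` at `a`:
`G_δ(F^x_{γ_p}([φ])) = F^x_{γ_q}([φ] · [γ_p * δ * γ̄_q])`, explicitly
`δ^{(φ * γ_p)^x(1)}(1) = ((φ * (γ_p * δ * γ̄_q)) * γ_q)^x(1)`; that is, in terms of the labeling of
the fibers, `G_δ` acts as right multiplication by the class `[γ_p * δ * γ̄_q]`. -/
theorem fiber_transport_is_right_multiplication
    {E X : Type*} [TopologicalSpace E] [TopologicalSpace X]
    (r : E → X) (hr : IsCoveringMap r)
    (a p q : X) (x : E) (hx : r x = a)
    (γp : Path a p) (γq : Path a q) (δ : Path p q) :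
    ∀ (φ : Path a a) (z₁ : E) (Γ₁ : Path x z₁) (w : E) (Δ : Path z₁ w)
      (z₂ : E) (Γ₂ : Path x z₂),
      IsPathLift r (φ.trans γp) Γ₁ →
      IsPathLift r δ Δ →
      IsPathLift r ((φ.trans ((γp.trans δ).trans γq.symm)).trans γq) Γ₂ →
      w = z₂ :=
  fiber_transport_is_right_multiplication_general r hr a p q x γp γq δ
end

section
/- Let r : M̂ → M be a covering map, let a, p, q ∈ M, x ∈ r⁻¹(a), let γ_p be a path from a to p and γ_q a path from a to q. Then for every η ∈ π₁(M, a) there exists a path δ in M from p to q such that for every class [φ] ∈ π₁(M, a): G_δ(F^x_{γ_p}([φ])) = F^x_{γ_q}([φ] · η). That is, every right multiplication on the labelings of the fibers can be realized by some path δ from p to q. -/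
open unitInterval

theorem combo_mem (t₀ t₁ t : I) : (1 - (t : ℝ)) * t₀ + t * t₁ ∈ I := by
  constructor
  · nlinarith [t.2.1, t.2.2, t₀.2.1, t₁.2.1]
  · nlinarith [t.2.1, t.2.2, t₀.2.2, t₁.2.2, t₀.2.1, t₁.2.1]

/-- The affine subpath of a path between parameters `t₀` and `t₁`. -/
def subpath {E : Type*} [TopologicalSpace E] {x z : E} (C : Path x z) (t₀ t₁ : I) :
    Path (C t₀) (C t₁) where
  toFun t := C ⟨(1 - (t : ℝ)) * t₀ + t * t₁, combo_mem t₀ t₁ t⟩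
  continuous_toFun := C.continuous.comp (by fun_prop)
  source' := by norm_num
  target' := by norm_num

theorem subpath_apply {E : Type*} [TopologicalSpace E] {x z : E} (C : Path x z) (t₀ t₁ : I)
    (t : I) : subpath C t₀ t₁ t = C ⟨(1 - (t : ℝ)) * t₀ + t * t₁, combo_mem t₀ t₁ t⟩ := rfl

theorem IsPathLift.trans {E X : Type*} [TopologicalSpace E] [TopologicalSpace X]
    {r : E → X} {a b c : X} {α : Path a b} {β : Path b c} {x y z : E}
    {A : Path x y} {B : Path y z} (hA : IsPathLift r α A) (hB : IsPathLift r β B) :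
    IsPathLift r (α.trans β) (A.trans B) := by
  intro t
  rw [Path.trans_apply, Path.trans_apply]
  split_ifs
  · exact hA _
  · exact hB _

theorem IsPathLift.cast {E X : Type*} [TopologicalSpace E] [TopologicalSpace X]
    {r : E → X} {a b : X} {α : Path a b} {x y x' y' : E}
    {A : Path x y} (hA : IsPathLift r α A) (hx : x' = x) (hy : y' = y) :
    IsPathLift r α (A.cast hx hy) := hA

/-- For a covering map `r`, points `a, p, q`, `x ∈ r⁻¹(a)`, and paths `γ_p : a → p`, `γ_q : a → q`,
every right multiplication on the labelings of the fibers can be realized by some path `δ` from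
`p` to `q`: for every `η ∈ π₁(M, a)` there is a path `δ : p → q` with
`G_δ(F^x_{γ_p}([φ])) = F^x_{γ_q}([φ] · η)` for every class `[φ]`. -/
theorem right_multiplication_realized_by_path
    {E X : Type*} [TopologicalSpace E] [TopologicalSpace X]
    (r : E → X) (hr : IsCoveringMap r)
    (a p q : X) (x : E) (hx : r x = a)
    (γp : Path a p) (γq : Path a q) :
    ∀ η : Path a a, ∃ δ : Path p q,
      ∀ (φ : Path a a) (z₁ : E) (Γ₁ : Path x z₁) (w : E) (Δ : Path z₁ w)
        (z₂ : E) (Γ₂ : Path x z₂),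
        IsPathLift r (φ.trans γp) Γ₁ →
        IsPathLift r δ Δ →
        IsPathLift r ((φ.trans η).trans γq) Γ₂ →
        w = z₂ := by
  intro η
  refine ⟨γp.symm.trans (η.trans γq), ?_⟩
  intro φ z₁ Γ₁ w Δ z₂ Γ₂ hΓ₁ hΔ hΓ₂
  set t4 : I := ⟨1/4, by norm_num⟩ with ht4
  set t2 : I := ⟨1/2, by norm_num⟩ with ht2
  -- the first half of Γ₁ lifts φ
  have hΦ : IsPathLift r φ (subpath Γ₁ 0 t2) := by
    intro t
    rw [subpath_apply, hΓ₁, Path.trans_apply]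
    split_ifs with h
    · exact congrArg φ (Subtype.ext (by push_cast [ht2]; ring))
    · exfalso; push_cast [ht2] at h; nlinarith [t.2.2]
  -- the first quarter of Γ₂ lifts φ
  have hΦ' : IsPathLift r φ (subpath Γ₂ 0 t4) := by
    intro t
    rw [subpath_apply, hΓ₂, Path.trans_apply]
    split_ifs with h
    · rw [Path.trans_apply]
      split_ifs with h'
      · exact congrArg φ (Subtype.ext (by push_cast [ht4]; ring))
      · exfalso; push_cast [ht4] at h'; nlinarith [t.2.2]
    · exfalso; push_cast [ht4] at h; nlinarith [t.2.2]
  -- uniqueness: the two lifts of φ starting at x agree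
  have hmid : Γ₁ t2 = Γ₂ t4 := by
    have heq : ⇑(subpath Γ₁ 0 t2) = ⇑(subpath Γ₂ 0 t4) := by
      refine hr.eq_of_comp_eq (subpath Γ₁ 0 t2).continuous (subpath Γ₂ 0 t4).continuous
        (funext fun t => (hΦ t).trans (hΦ' t).symm) 0 ?_
      rw [(subpath Γ₁ 0 t2).source, (subpath Γ₂ 0 t4).source, Γ₁.source, Γ₂.source]
    have := congrFun heq 1
    rwa [(subpath Γ₁ 0 t2).target, (subpath Γ₂ 0 t4).target] at this
  -- the reversed second half of Γ₁ lifts γp.symm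
  have hP : IsPathLift r γp.symm (subpath Γ₁ 1 t2) := by
    intro t
    rw [subpath_apply, hΓ₁, Path.trans_apply]
    split_ifs with h
    · have ht : t = 1 := by
        apply Subtype.ext
        push_cast [ht2] at h ⊢
        linarith [t.2.1, t.2.2]
      subst ht
      trans (φ 1)
      · exact congrArg φ (Subtype.ext (by push_cast [ht2]; norm_num))
      · simp [Path.symm_apply]
    · rw [Path.symm_apply]
      exact congrArg γp (Subtype.ext (by push_cast [ht2]; simp [unitInterval.symm]; ring))
  -- the second quarter of Γ₂ lifts η
  have hH : IsPathLift r η (subpath Γ₂ t4 t2) := by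
    intro t
    rw [subpath_apply, hΓ₂, Path.trans_apply]
    split_ifs with h
    · rw [Path.trans_apply]
      split_ifs with h'
      · have ht : t = 0 := by
          apply Subtype.ext
          push_cast [ht4, ht2] at h' ⊢
          linarith [t.2.1, t.2.2]
        subst ht
        trans (φ 1)
        · exact congrArg φ (Subtype.ext (by push_cast [ht4, ht2]; norm_num))
        · simp
      · exact congrArg η (Subtype.ext (by push_cast [ht4, ht2]; ring))
    · exfalso; push_cast [ht4, ht2] at h; nlinarith [t.2.2]
  -- the second half of Γ₂ lifts γq
  have hQ : IsPathLift r γq (subpath Γ₂ t2 1) := by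
    intro t
    rw [subpath_apply, hΓ₂, Path.trans_apply]
    split_ifs with h
    · have ht : t = 0 := by
        apply Subtype.ext
        push_cast [ht2] at h ⊢
        linarith [t.2.1, t.2.2]
      subst ht
      trans ((φ.trans η) 1)
      · exact congrArg (φ.trans η) (Subtype.ext (by push_cast [ht2]; norm_num))
      · simp
    · exact congrArg γq (Subtype.ext (by push_cast [ht2]; ring))
  -- assemble an explicit lift of δ from z₁ to z₂
  set Δ' : Path z₁ z₂ :=
    ((subpath Γ₁ 1 t2).cast Γ₁.target.symm hmid.symm).trans
      ((subpath Γ₂ t4 t2).trans ((subpath Γ₂ t2 1).cast rfl Γ₂.target.symm)) with hΔ'def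
  have hΔ' : IsPathLift r (γp.symm.trans (η.trans γq)) Δ' :=
    (hP.cast _ _).trans (hH.trans (hQ.cast _ _))
  have heq : ⇑Δ = ⇑Δ' := by
    refine hr.eq_of_comp_eq Δ.continuous Δ'.continuous
      (funext fun t => (hΔ t).trans (hΔ' t).symm) 0 ?_
    rw [Δ.source, Δ'.source]
  have := congrFun heq 1
  rwa [Δ.target, Δ'.target] at this
end

section
/- Let r : M̂ → M be a covering map with M̂ simply connected, let a, p ∈ M, x ∈ r⁻¹(a), and let γ, γ' be paths in M from a to p. Then γ and γ' are path-homotopic if and only if their lifts starting at x have the same endpoint, i.e. γ^x(1) = γ'^x(1). -/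
namespace IsPathLift

variable {E X : Type*} [TopologicalSpace E] [TopologicalSpace X] {r : E → X} {a b : X}
  {x z : E}

theorem proj_source {γ : Path a b} {Γ : Path x z} (h : IsPathLift r γ Γ) : r x = a := by
  simpa using h 0

theorem proj_target {γ : Path a b} {Γ : Path x z} (h : IsPathLift r γ Γ) : r z = b := by
  simpa using h 1

theorem toContinuousMap_eq_liftPath (hr : IsCoveringMap r) {γ : Path a b} {Γ : Path x z}
    (h : IsPathLift r γ Γ) :
    Γ.toContinuousMap = hr.liftPath γ x (γ.source.trans h.proj_source.symm) :=
  (hr.eq_liftPath_iff' _).mpr ⟨funext h, Γ.source⟩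

theorem target_eq_of_homotopic (hr : IsCoveringMap r) {γ γ' : Path a b} {z' : E}
    {Γ : Path x z} {Γ' : Path x z'} (hΓ : IsPathLift r γ Γ) (hΓ' : IsPathLift r γ' Γ')
    (h : γ.Homotopic γ') : z = z' :=
  calc z = Γ 1 := Γ.target.symm
    _ = hr.liftPath γ x _ 1 := DFunLike.congr_fun (hΓ.toContinuousMap_eq_liftPath hr) 1
    _ = hr.liftPath γ' x _ 1 := hr.liftPath_apply_one_eq_of_homotopicRel h x _ _
    _ = Γ' 1 := DFunLike.congr_fun (hΓ'.toContinuousMap_eq_liftPath hr).symm 1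
    _ = z' := Γ'.target

theorem homotopic [SimplyConnectedSpace E] (hr : Continuous r) {γ γ' : Path a b}
    {Γ Γ' : Path x z} (hΓ : IsPathLift r γ Γ) (hΓ' : IsPathLift r γ' Γ') : γ.Homotopic γ' := by
  obtain rfl := hΓ.proj_source
  obtain rfl := hΓ.proj_target
  obtain rfl : γ = Γ.map hr := Path.ext (funext fun t => (hΓ t).symm)
  obtain rfl : γ' = Γ'.map hr := Path.ext (funext fun t => (hΓ' t).symm)
  exact (SimplyConnectedSpace.paths_homotopic Γ Γ').map ⟨r, hr⟩

end IsPathLift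

theorem homotopic_iff_lifts_same_endpoint_general
    {E X : Type*} [TopologicalSpace E] [TopologicalSpace X]
    (r : E → X) (hr : IsCoveringMap r) [SimplyConnectedSpace E]
    (a p : X) (x : E) (γ γ' : Path a p) :
    ∀ (z z' : E) (Γ : Path x z) (Γ' : Path x z'),
      IsPathLift r γ Γ → IsPathLift r γ' Γ' →
      (γ.Homotopic γ' ↔ z = z') := by
  intro z z' Γ Γ' hΓ hΓ'
  refine ⟨hΓ.target_eq_of_homotopic hr hΓ', ?_⟩
  rintro rfl
  exact hΓ.homotopic hr.continuous hΓ'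

/-- For a covering map `r` with simply connected total space, two paths `γ, γ'` in the base from
`a` to `p` are path-homotopic iff their lifts starting at `x ∈ r⁻¹(a)` have the same endpoint:
`γ^x(1) = γ'^x(1)`. -/
theorem homotopic_iff_lifts_same_endpoint
    {E X : Type*} [TopologicalSpace E] [TopologicalSpace X]
    (r : E → X) (hr : IsCoveringMap r) [SimplyConnectedSpace E]
    (a p : X) (x : E) (hx : r x = a) (γ γ' : Path a p) :
    ∀ (z z' : E) (Γ : Path x z) (Γ' : Path x z'),
      IsPathLift r γ Γ → IsPathLift r γ' Γ' →
      (γ.Homotopic γ' ↔ z = z') :=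
  homotopic_iff_lifts_same_endpoint_general r hr a p x γ γ'
end

section
/- Let G be the group presented by generators a, b, c and the single relation a²b²c²b⁻² = 1 (i.e. the quotient of the free group on {a, b, c} by the normal closure of a²b²c²b⁻²), and let g₁ = b² and g₂ = a b² c in G. Then g₁ ≠ g₂, while a · g₁ · c = g₂ and a · g₂ · c = g₁. In particular there exist h, h' ∈ G with h g₁ h' = g₂ and h g₂ h' = g₁ even though g₁ ≠ g₂. -/
/-- The group `⟨a, b, c | a²b²c²b⁻² = 1⟩`: the quotient of the free group on three generators by
the normal closure of the single relator `a²b²c²b⁻²`. Here `a, b, c` are `FreeGroup.of 0`,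
`FreeGroup.of 1`, `FreeGroup.of 2`. -/
abbrev PaperGroup : Type :=
  PresentedGroup ({FreeGroup.of 0 ^ 2 * FreeGroup.of 1 ^ 2 * FreeGroup.of 2 ^ 2 *
    (FreeGroup.of 1 ^ 2)⁻¹} : Set (FreeGroup (Fin 3)))

/-- The images of the generators `a`, `b`, `c` in `PaperGroup`. -/
def pa : PaperGroup := PresentedGroup.of 0
def pb : PaperGroup := PresentedGroup.of 1
def pc : PaperGroup := PresentedGroup.of 2

private def fgen : Fin 3 → Multiplicative (ZMod 2) :=
  ![Multiplicative.ofAdd 1, 1, 1]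

private lemma fcond : ∀ r ∈ ({FreeGroup.of 0 ^ 2 * FreeGroup.of 1 ^ 2 * FreeGroup.of 2 ^ 2 *
    (FreeGroup.of 1 ^ 2)⁻¹} : Set (FreeGroup (Fin 3))), FreeGroup.lift fgen r = 1 := by
  intro r hr
  simp only [Set.mem_singleton_iff] at hr
  subst hr
  simp only [map_mul, map_pow, map_inv, FreeGroup.lift_apply_of]
  decide

private def f : PaperGroup →* Multiplicative (ZMod 2) :=
  PresentedGroup.toGroup fcond

private lemma key : pa ^ 2 * pb ^ 2 * pc ^ 2 = pb ^ 2 := by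
  have h : (PresentedGroup.mk _ (FreeGroup.of 0 ^ 2 * FreeGroup.of 1 ^ 2 * FreeGroup.of 2 ^ 2 *
      (FreeGroup.of 1 ^ 2)⁻¹) : PaperGroup) = 1 := by
    apply (QuotientGroup.eq_one_iff _).mpr
    exact Subgroup.subset_normalClosure rfl
  have h2 : pa ^ 2 * pb ^ 2 * pc ^ 2 * (pb ^ 2)⁻¹ = 1 := by
    simpa [pa, pb, pc, PresentedGroup.of, map_mul, map_pow, map_inv] using h
  group at h2
  exact mul_inv_eq_one.mp h2

/-- In `G = ⟨a, b, c | a²b²c²b⁻² = 1⟩`, with `g₁ = b²` and `g₂ = ab²c`, we have `g₁ ≠ g₂`, while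
`a·g₁·c = g₂` and `a·g₂·c = g₁`; in particular there are `h, h' ∈ G` with `h g₁ h' = g₂` and
`h g₂ h' = g₁` even though `g₁ ≠ g₂`. -/
theorem symbol_equivalent_to_reversed_with_distinct_elements :
    pb ^ 2 ≠ pa * pb ^ 2 * pc ∧
    pa * (pb ^ 2) * pc = pa * pb ^ 2 * pc ∧
    pa * (pa * pb ^ 2 * pc) * pc = pb ^ 2 ∧
    ∃ h h' : PaperGroup,
      h * (pb ^ 2) * h' = pa * pb ^ 2 * pc ∧
      h * (pa * pb ^ 2 * pc) * h' = pb ^ 2 := by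
  have hkey : pa * (pa * pb ^ 2 * pc) * pc = pb ^ 2 := by
    have := key
    rw [show pa * (pa * pb ^ 2 * pc) * pc = pa ^ 2 * pb ^ 2 * pc ^ 2 by rw [sq pa, sq pc]; simp [mul_assoc]]
    exact this
  refine ⟨?_, rfl, hkey, pa, pc, rfl, hkey⟩
  intro h
  have := congrArg f h
  simp only [map_mul, map_pow] at this
  have ha : f pa = Multiplicative.ofAdd 1 := PresentedGroup.toGroup.of fcond
  have hb : f pb = 1 := PresentedGroup.toGroup.of fcond
  have hc : f pc = 1 := PresentedGroup.toGroup.of fcond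
  rw [ha, hb, hc] at this
  simp at this
  exact (by decide : (Multiplicative.ofAdd (1 : ZMod 2)) ≠ 1) this.symm
end
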